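/- arXiv:1412.0964 — 2 statements merged into one kernel-verified Lean document; each statement's English description precedes it below -/
import Mathlib

section
/- Let 0 < ε ≤ 1/2 and let s, i, r ≥ 0 satisfy |s + i + r − 1| ≤ ε. Then for every t ≥ 0, |β(t)·s·i/(s+i+r) − β(t)·s·i| ≤ 8 β₀(1+β₁) ε, where β(t) = β₀(1 + β₁ cos(2πt)) with β₀ > 0, β₁ ∈ (0,1). -/
/-- The seasonal transmission rate `β(t) = β₀ (1 + β₁ cos (2π t))`. -/
noncomputable def seasonalBeta (β₀ β₁ t : ℝ) : ℝ :=
  β₀ * (1 + β₁ * Real.cos (2 * Real.pi * t))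

/-- Let `0 < ε ≤ 1/2` and let `s, i, r ≥ 0` satisfy `|s + i + r − 1| ≤ ε`. Then for every
`t ≥ 0`, `|β(t)·s·i/(s+i+r) − β(t)·s·i| ≤ 8 β₀ (1+β₁) ε`, where
`β(t) = β₀ (1 + β₁ cos (2π t))` with `β₀ > 0` and `β₁ ∈ (0,1)`. -/
theorem infection_rate_perturbation_bound
    (β₀ β₁ : ℝ) (hβ₀ : 0 < β₀) (hβ₁ : β₁ ∈ Set.Ioo (0 : ℝ) 1)
    (ε : ℝ) (hε : 0 < ε) (hε' : ε ≤ 1 / 2)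
    (s i r : ℝ) (hs : 0 ≤ s) (hi : 0 ≤ i) (hr : 0 ≤ r)
    (htot : |s + i + r - 1| ≤ ε) :
    ∀ t : ℝ, 0 ≤ t →
      |seasonalBeta β₀ β₁ t * s * i / (s + i + r) - seasonalBeta β₀ β₁ t * s * i| ≤
        8 * β₀ * (1 + β₁) * ε := by
  intro t _
  obtain ⟨hb1, hb2⟩ := hβ₁
  obtain ⟨h1, h2⟩ := abs_le.mp htot
  set N : ℝ := s + i + r with hNdef
  have hNlb : (1/2 : ℝ) ≤ N := by linarith
  have hNub : N ≤ 3/2 := by linarith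
  have hNpos : (0 : ℝ) < N := by linarith
  set β : ℝ := seasonalBeta β₀ β₁ t with hβdef
  have hc1 := Real.neg_one_le_cos (2 * Real.pi * t)
  have hc2 := Real.cos_le_one (2 * Real.pi * t)
  have hm1 : β₁ * (-1) ≤ β₁ * Real.cos (2 * Real.pi * t) :=
    mul_le_mul_of_nonneg_left hc1 hb1.le
  have hm2 : β₁ * Real.cos (2 * Real.pi * t) ≤ β₁ * 1 :=
    mul_le_mul_of_nonneg_left hc2 hb1.le
  have hβnn : 0 ≤ β := by
    rw [hβdef, seasonalBeta]
    exact mul_nonneg hβ₀.le (by linarith)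
  have hβub : β ≤ β₀ * (1 + β₁) := by
    rw [hβdef, seasonalBeta]
    exact mul_le_mul_of_nonneg_left (by linarith) hβ₀.le
  have heq : β * s * i / N - β * s * i = β * s * i * ((1 - N) / N) := by
    field_simp
  rw [heq, abs_mul, abs_div, abs_of_nonneg (by positivity : 0 ≤ β * s * i),
    abs_of_pos hNpos]
  have h1N : |1 - N| ≤ ε := by rw [abs_sub_comm]; exact htot
  have hdiv : |1 - N| / N ≤ 2 * ε := by
    rw [div_le_iff₀ hNpos]; nlinarith
  have hsle : s ≤ 3/2 := by linarith
  have hile : i ≤ 3/2 := by linarith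
  have hsi' : s * i ≤ 9/4 := by nlinarith
  have hsi : β * s * i ≤ β₀ * (1 + β₁) * (9/4) := by
    rw [mul_assoc]
    exact mul_le_mul hβub hsi' (by positivity) (by positivity)
  calc β * s * i * (|1 - N| / N) ≤ β₀ * (1 + β₁) * (9/4) * (2 * ε) := by
        apply mul_le_mul hsi hdiv (by positivity) (by positivity)
    _ ≤ 8 * β₀ * (1 + β₁) * ε := by nlinarith
end

section
/- Let a: [0,t₀] → ℝ be continuous, let δ ≥ 0, and let h: [0,t₀] → ℂ be a bounded measurable function satisfying |h(t) − 1 + ∫₀ᵗ a(s) h(s) ds| ≤ δ for all t ∈ [0,t₀]. Then |h(t) − exp(−∫₀ᵗ a(s) ds)| ≤ δ · exp(∫₀ᵗ |a(s)| ds) for all t ∈ [0,t₀]. In particular, if a sequence of such functions h_N satisfies the hypothesis with δ = δ_N → 0, then h_N converges uniformly on [0,t₀] to exp(−∫₀ᵗ a(s) ds). -/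
/-!
With `e(t) = exp(-∫₀ᵗ a)` one has `∫₀ᵗ a e = 1 - e(t)`, so `f = h - e` satisfies
`f(t) = (h(t) - 1 + ∫₀ᵗ a h) - ∫₀ᵗ a f` and hence `‖f(t)‖ ≤ δ + ∫₀ᵗ |a| ‖f‖`. Gronwall's
inequality turns this into `‖f(t)‖ ≤ δ exp(∫₀ᵗ |a|)`; the bound is uniform on `[0,t₀]`, which gives
the uniform convergence. Gronwall itself is proved by subtracting the exact solution
`δ exp(∫₀ᵗ k)` of the integral equation and iterating the resulting homogeneous inequality,
which bounds the difference by `C (∫₀ᵗ k)ⁿ / n!` for every `n`.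
-/

open Set MeasureTheory Filter intervalIntegral

section Gronwall

variable {k : ℝ → ℝ}

theorem integral_mul_integral_pow (hk : Continuous k) (n : ℕ) (t : ℝ) :
    ∫ s in (0 : ℝ)..t, k s * (∫ r in (0 : ℝ)..s, k r) ^ n =
      (∫ s in (0 : ℝ)..t, k s) ^ (n + 1) / (n + 1) := by
  have := integral_comp_mul_deriv (g := fun x : ℝ => x ^ n) (a := 0) (b := t)
    (fun x _ => (hk.integral_hasStrictDerivAt 0 x).hasDerivAt) hk.continuousOn (continuous_pow n)
  simpa [mul_comm] using this

theorem integral_mul_exp_integral (hk : Continuous k) (t : ℝ) :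
    ∫ s in (0 : ℝ)..t, k s * Real.exp (∫ r in (0 : ℝ)..s, k r) =
      Real.exp (∫ s in (0 : ℝ)..t, k s) - 1 := by
  have := integral_comp_mul_deriv (g := Real.exp) (a := 0) (b := t)
    (fun x _ => (hk.integral_hasStrictDerivAt 0 x).hasDerivAt) hk.continuousOn Real.continuous_exp
  simpa [mul_comm] using this

theorem integral_ofReal_mul_cexp_neg_integral (hk : Continuous k) (t : ℝ) :
    ∫ s in (0 : ℝ)..t, (k s : ℂ) * Complex.exp (-((∫ r in (0 : ℝ)..s, k r : ℝ) : ℂ)) =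
      1 - Complex.exp (-((∫ s in (0 : ℝ)..t, k s : ℝ) : ℂ)) := by
  have hderiv (x : ℝ) : HasDerivAt (fun u => 1 - Complex.exp (-((∫ r in (0 : ℝ)..u, k r : ℝ) : ℂ)))
      ((k x : ℂ) * Complex.exp (-((∫ r in (0 : ℝ)..x, k r : ℝ) : ℂ))) x := by
    have := ((hk.integral_hasStrictDerivAt 0 x).hasDerivAt.ofReal_comp.neg.cexp).const_sub 1
    exact this.congr_deriv (by simp only [Pi.neg_apply]; ring)
  rw [integral_eq_sub_of_hasDerivAt (fun x _ => hderiv x)]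
  · simp
  · exact (Continuous.intervalIntegrable (by fun_prop) _ _)

theorem nonpos_of_le_integral_mul {T C : ℝ} {w : ℝ → ℝ} (hk : Continuous k) (hk0 : ∀ s, 0 ≤ k s)
    (hw_int : ∀ t ∈ Icc 0 T, IntervalIntegrable (fun s => k s * w s) volume 0 t)
    (hwC : ∀ t ∈ Icc 0 T, w t ≤ C)
    (hw : ∀ t ∈ Icc 0 T, w t ≤ ∫ s in (0 : ℝ)..t, k s * w s) :
    ∀ t ∈ Icc 0 T, w t ≤ 0 := by
  set B : ℝ → ℝ := fun t => ∫ s in (0 : ℝ)..t, k s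
  have hpow (n : ℕ) : ∀ t ∈ Icc 0 T, w t ≤ C * (B t ^ n / n.factorial) := by
    induction n with
    | zero => simpa using hwC
    | succ n ih =>
      intro t ht
      calc w t ≤ ∫ s in (0 : ℝ)..t, k s * w s := hw t ht
        _ ≤ ∫ s in (0 : ℝ)..t, k s * (C * (B s ^ n / n.factorial)) := by
          refine integral_mono_on ht.1 (hw_int t ht)
            (Continuous.intervalIntegrable (by fun_prop) _ _)
            fun s hs => mul_le_mul_of_nonneg_left (ih s ⟨hs.1, hs.2.trans ht.2⟩) (hk0 s)
        _ = C / n.factorial * ∫ s in (0 : ℝ)..t, k s * B s ^ n := by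
          rw [← intervalIntegral.integral_const_mul]
          congr 1 with s
          ring
        _ = C * (B t ^ (n + 1) / (n + 1).factorial) := by
          rw [show ∫ s in (0 : ℝ)..t, k s * B s ^ n = B t ^ (n + 1) / (n + 1) from
            integral_mul_integral_pow hk n t, Nat.factorial_succ]
          push_cast
          field_simp
  intro t ht
  have hlim := (FloorSemiring.tendsto_pow_div_factorial_atTop (B t)).const_mul C
  rw [mul_zero] at hlim
  exact ge_of_tendsto' hlim fun n => hpow n t ht

theorem le_mul_exp_integral_of_le_add_integral {T C δ : ℝ} {u : ℝ → ℝ} (hk : Continuous k)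
    (hk0 : ∀ s, 0 ≤ k s) (hδ : 0 ≤ δ)
    (hu_int : ∀ t ∈ Icc 0 T, IntervalIntegrable (fun s => k s * u s) volume 0 t)
    (huC : ∀ t ∈ Icc 0 T, u t ≤ C)
    (hu : ∀ t ∈ Icc 0 T, u t ≤ δ + ∫ s in (0 : ℝ)..t, k s * u s) :
    ∀ t ∈ Icc 0 T, u t ≤ δ * Real.exp (∫ s in (0 : ℝ)..t, k s) := by
  set v : ℝ → ℝ := fun t => δ * Real.exp (∫ s in (0 : ℝ)..t, k s)
  have hv_int (t : ℝ) : IntervalIntegrable (fun s => k s * v s) volume 0 t :=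
    Continuous.intervalIntegrable (by fun_prop) _ _
  have hv (t : ℝ) : v t = δ + ∫ s in (0 : ℝ)..t, k s * v s := by
    simp only [v, mul_left_comm (k _) δ, intervalIntegral.integral_const_mul,
      integral_mul_exp_integral hk]
    ring
  have key := nonpos_of_le_integral_mul (w := fun t => u t - v t) (C := C) hk hk0
    (fun t ht => by simpa only [mul_sub] using (hu_int t ht).sub (hv_int t))
    (fun t ht => by linarith [huC t ht, show 0 ≤ v t by positivity])
    (fun t ht => by
      simp only [mul_sub]
      rw [integral_sub (hu_int t ht) (hv_int t)]
      linarith [hu t ht, hv t])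
  exact fun t ht => sub_nonpos.1 (key t ht)

end Gronwall

theorem intervalIntegrable_of_norm_le {E : Type*} [NormedAddCommGroup E] {f : ℝ → E}
    {a b M : ℝ} (hf : AEStronglyMeasurable f volume) (hM : ∀ x ∈ uIcc a b, ‖f x‖ ≤ M) :
    IntervalIntegrable f volume a b :=
  (intervalIntegrable_iff' (μ := volume)).2 <| Measure.integrableOn_of_bounded
    (isCompact_uIcc.measure_lt_top (μ := volume)).ne hf
    ((ae_restrict_iff' measurableSet_uIcc).2 (Eventually.of_forall hM))

theorem uIcc_subset_Icc_of_mem_Icc {T t : ℝ} (ht : t ∈ Icc 0 T) : uIcc 0 t ⊆ Icc 0 T := by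
  rw [uIcc_of_le ht.1]
  exact Icc_subset_Icc_right ht.2

theorem integral_congr_of_eqOn_Icc {E : Type*} [NormedAddCommGroup E] [NormedSpace ℝ E]
    {f g : ℝ → E} {T t : ℝ} (hfg : EqOn f g (Icc 0 T)) (ht : t ∈ Icc 0 T) :
    ∫ s in (0 : ℝ)..t, f s = ∫ s in (0 : ℝ)..t, g s :=
  integral_congr (hfg.mono (uIcc_subset_Icc_of_mem_Icc ht))

theorem ContinuousOn.exists_continuous_eqOn_Icc {α β : Type*} [LinearOrder α]
    [TopologicalSpace α] [OrderTopology α] [TopologicalSpace β] {a b : α} (hab : a ≤ b)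
    {f : α → β} (hf : ContinuousOn f (Icc a b)) : ∃ g : α → β, Continuous g ∧ EqOn g f (Icc a b) :=
  ⟨IccExtend hab ((Icc a b).domRestrict f),
    (continuousOn_iff_continuous_domRestrict.1 hf).Icc_extend',
    fun _ hx => IccExtend_of_mem hab _ hx⟩

theorem norm_sub_cexp_neg_integral_le {a : ℝ → ℝ} {h : ℝ → ℂ} {T δ M : ℝ} (ha : Continuous a)
    (hh : Measurable h) (hM : ∀ t ∈ Icc 0 T, ‖h t‖ ≤ M) (hδ : 0 ≤ δ)
    (hyp : ∀ t ∈ Icc 0 T, ‖h t - 1 + ∫ s in (0 : ℝ)..t, (a s : ℂ) * h s‖ ≤ δ) :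
    ∀ t ∈ Icc 0 T, ‖h t - Complex.exp (-((∫ s in (0 : ℝ)..t, a s : ℝ) : ℂ))‖ ≤
      δ * Real.exp (∫ s in (0 : ℝ)..t, |a s|) := by
  set e : ℝ → ℂ := fun t => Complex.exp (-((∫ s in (0 : ℝ)..t, a s : ℝ) : ℂ))
  have he : Continuous e := by
    have := continuous_primitive (μ := volume) (fun _ _ => ha.intervalIntegrable _ _) 0
    fun_prop
  obtain ⟨Ce, hCe⟩ := isCompact_Icc.exists_bound_of_continuousOn (he.continuousOn (s := Icc 0 T))
  have hah_int (t : ℝ) (ht : t ∈ Icc 0 T) :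
      IntervalIntegrable (fun s => (a s : ℂ) * h s) volume 0 t :=
    (intervalIntegrable_of_norm_le hh.aestronglyMeasurable
      fun s hs => hM s (uIcc_subset_Icc_of_mem_Icc ht hs)).continuousOn_mul (by fun_prop)
  have hae_int (t : ℝ) : IntervalIntegrable (fun s => (a s : ℂ) * e s) volume 0 t :=
    Continuous.intervalIntegrable (by fun_prop) _ _
  have haf_int (t : ℝ) (ht : t ∈ Icc 0 T) :
      IntervalIntegrable (fun s => (a s : ℂ) * (h s - e s)) volume 0 t := by
    simpa only [mul_sub] using (hah_int t ht).sub (hae_int t)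
  have hdecomp (t : ℝ) (ht : t ∈ Icc 0 T) : h t - e t =
      (h t - 1 + ∫ s in (0 : ℝ)..t, (a s : ℂ) * h s) -
        ∫ s in (0 : ℝ)..t, (a s : ℂ) * (h s - e s) := by
    simp only [mul_sub]
    rw [integral_sub (hah_int t ht) (hae_int t), integral_ofReal_mul_cexp_neg_integral ha]
    ring
  have hnorm (s : ℝ) : ‖(a s : ℂ) * (h s - e s)‖ = |a s| * ‖h s - e s‖ := by
    rw [norm_mul, Complex.norm_real, Real.norm_eq_abs]
  refine le_mul_exp_integral_of_le_add_integral (u := fun t => ‖h t - e t‖) (C := M + Ce)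
    ha.abs (fun _ => abs_nonneg _) hδ (fun t ht => ?_) (fun t ht => ?_) (fun t ht => ?_)
  · simpa only [hnorm] using (haf_int t ht).norm
  · exact (norm_sub_le _ _).trans (add_le_add (hM t ht) (hCe t ht))
  · calc ‖h t - e t‖
        ≤ ‖h t - 1 + ∫ s in (0 : ℝ)..t, (a s : ℂ) * h s‖ +
            ‖∫ s in (0 : ℝ)..t, (a s : ℂ) * (h s - e s)‖ := by
          rw [hdecomp t ht]
          exact norm_sub_le _ _
      _ ≤ δ + ∫ s in (0 : ℝ)..t, |a s| * ‖h s - e s‖ := by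
          gcongr
          · exact hyp t ht
          · simpa only [hnorm] using
              norm_integral_le_integral_norm (f := fun s => (a s : ℂ) * (h s - e s)) ht.1

theorem norm_sub_cexp_neg_integral_le_of_continuousOn {a : ℝ → ℝ} {h : ℝ → ℂ} {T δ M : ℝ}
    (hT : 0 ≤ T) (ha : ContinuousOn a (Icc 0 T)) (hh : Measurable h)
    (hM : ∀ t ∈ Icc 0 T, ‖h t‖ ≤ M) (hδ : 0 ≤ δ)
    (hyp : ∀ t ∈ Icc 0 T, ‖h t - 1 + ∫ s in (0 : ℝ)..t, (a s : ℂ) * h s‖ ≤ δ) :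
    ∀ t ∈ Icc 0 T, ‖h t - Complex.exp (-((∫ s in (0 : ℝ)..t, a s : ℝ) : ℂ))‖ ≤
      δ * Real.exp (∫ s in (0 : ℝ)..t, |a s|) := by
  obtain ⟨b, hb, hba⟩ := ha.exists_continuous_eqOn_Icc hT
  have hmul {t : ℝ} (ht : t ∈ Icc 0 T) :=
    integral_congr_of_eqOn_Icc (f := fun s => (a s : ℂ) * h s) (g := fun s => (b s : ℂ) * h s)
      (fun s hs => by simp only [hba hs]) ht
  intro t ht
  rw [integral_congr_of_eqOn_Icc (f := fun s => a s) (g := fun s => b s)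
      (fun s hs => (hba hs).symm) ht,
    integral_congr_of_eqOn_Icc (f := fun s => |a s|) (g := fun s => |b s|)
      (fun s hs => by simp only [hba hs]) ht]
  exact norm_sub_cexp_neg_integral_le hb hh hM hδ (fun t ht => hmul ht ▸ hyp t ht) t ht

theorem tendstoUniformlyOn_of_dist_le {ι β α : Type*} [PseudoMetricSpace α] {l : Filter ι}
    {F : ι → β → α} {f : β → α} {s : Set β} {u : ι → ℝ} (hu : Tendsto u l (nhds 0))
    (hFf : ∀ n, ∀ x ∈ s, dist (f x) (F n x) ≤ u n) : TendstoUniformlyOn F f l s :=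
  Metric.tendstoUniformlyOn_iff.2 fun _ hε =>
    (hu.eventually (gt_mem_nhds hε)).mono fun n hn x hx => (hFf n x hx).trans_lt hn

/-- Gronwall-type argument for characteristic functions. Let `a : [0,t₀] → ℝ` be
continuous, `δ ≥ 0`, and let `h : [0,t₀] → ℂ` be bounded measurable with
`|h(t) − 1 + ∫₀ᵗ a(s) h(s) ds| ≤ δ` for all `t ∈ [0,t₀]`. Then
`|h(t) − exp(−∫₀ᵗ a(s) ds)| ≤ δ exp(∫₀ᵗ |a(s)| ds)` on `[0,t₀]`. In particular, if a
sequence of such functions `h_N` satisfies the hypothesis with `δ = δ_N → 0`, then `h_N`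
converges uniformly on `[0,t₀]` to `exp(−∫₀ᵗ a(s) ds)`. -/
theorem charFun_gronwall_limit
    (t₀ : ℝ) (ht₀ : 0 ≤ t₀) (a : ℝ → ℝ) (ha : ContinuousOn a (Set.Icc 0 t₀)) :
    (∀ δ : ℝ, 0 ≤ δ → ∀ h : ℝ → ℂ, Measurable h →
      (∃ M : ℝ, ∀ t ∈ Set.Icc (0 : ℝ) t₀, ‖h t‖ ≤ M) →
      (∀ t ∈ Set.Icc (0 : ℝ) t₀,
        ‖h t - 1 + ∫ s in (0 : ℝ)..t, (a s : ℂ) * h s‖ ≤ δ) →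
      ∀ t ∈ Set.Icc (0 : ℝ) t₀,
        ‖h t - Complex.exp (-((∫ s in (0 : ℝ)..t, a s : ℝ) : ℂ))‖ ≤
          δ * Real.exp (∫ s in (0 : ℝ)..t, |a s|)) ∧
    (∀ (hN : ℕ → ℝ → ℂ) (δN : ℕ → ℝ),
      (∀ n, Measurable (hN n)) →
      (∀ n, ∃ M : ℝ, ∀ t ∈ Set.Icc (0 : ℝ) t₀, ‖hN n t‖ ≤ M) →
      (∀ n, 0 ≤ δN n) →
      (∀ n, ∀ t ∈ Set.Icc (0 : ℝ) t₀,
        ‖hN n t - 1 + ∫ s in (0 : ℝ)..t, (a s : ℂ) * hN n s‖ ≤ δN n) →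
      Tendsto δN atTop (nhds 0) →
      TendstoUniformlyOn hN
        (fun t => Complex.exp (-((∫ s in (0 : ℝ)..t, a s : ℝ) : ℂ)))
        atTop (Set.Icc 0 t₀)) := by
  refine ⟨fun δ hδ h hh ⟨M, hM⟩ hyp =>
      norm_sub_cexp_neg_integral_le_of_continuousOn ht₀ ha hh hM hδ hyp,
    fun hN δN hmeas hbdd hδ hyp hlim => ?_⟩
  set C := Real.exp (∫ s in (0 : ℝ)..t₀, |a s|)
  refine tendstoUniformlyOn_of_dist_le (u := fun n => δN n * C)
    (by simpa using hlim.mul_const C) fun n t ht => ?_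
  obtain ⟨M, hM⟩ := hbdd n
  rw [dist_comm, dist_eq_norm]
  calc _ ≤ δN n * Real.exp (∫ s in (0 : ℝ)..t, |a s|) :=
        norm_sub_cexp_neg_integral_le_of_continuousOn ht₀ ha (hmeas n) hM (hδ n) (hyp n) t ht
    _ ≤ δN n * C := by
        refine mul_le_mul_of_nonneg_left (Real.exp_le_exp.2 ?_) (hδ n)
        exact integral_mono_interval le_rfl ht.1 ht.2 (Eventually.of_forall fun _ => abs_nonneg _)
          (ha.abs.intervalIntegrable_of_Icc (μ := volume) ht₀)
end
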